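/- arXiv:1907.02624 — 5 statements merged into one kernel-verified Lean document; each statement's English description precedes it below -/
import Mathlib

section
/- Let X be an Alexandroff space and q : X → X₀ its Kolmogorov (T₀) quotient, identifying topologically indistinguishable points. Then q is a homotopy equivalence: any section i of q satisfies q∘i = id and i∘q is homotopic to the identity of X. -/
/-- For an Alexandroff space `X`, the Kolmogorov quotient map
`q : X → X₀ = SeparationQuotient X` is a homotopy equivalence: any continuous section `i`
of `q` satisfies `q ∘ i = id` and `i ∘ q` is homotopic to the identity of `X`. -/
theorem stmt_6 (X : Type*) [TopologicalSpace X] [AlexandrovDiscrete X]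
    (q : C(X, SeparationQuotient X)) (hq : ∀ x : X, q x = SeparationQuotient.mk x)
    (i : C(SeparationQuotient X, X)) (hi : ∀ z : SeparationQuotient X, q (i z) = z) :
    q.comp i = ContinuousMap.id (SeparationQuotient X) ∧
      (i.comp q).Homotopic (ContinuousMap.id X) := by
  classical
  have key : ∀ x : X, Inseparable (i (q x)) x := by
    intro x
    rw [← SeparationQuotient.mk_eq_mk, ← hq, ← hq]
    exact hi (q x)
  constructor
  · ext z
    simp [hi z]
  · refine ⟨⟨⟨fun p => if p.1 = 0 then i (q p.2) else p.2, ?_⟩, ?_, ?_⟩⟩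
    · rw [continuous_def]
      intro U hU
      have : (fun p : unitInterval × X => if p.1 = 0 then i (q p.2) else p.2) ⁻¹' U
          = Prod.snd ⁻¹' U := by
        ext ⟨t, x⟩
        simp only [Set.mem_preimage]
        split_ifs with h
        · exact (key x).mem_open_iff hU
        · rfl
      rw [this]
      exact hU.preimage continuous_snd
    · intro x; simp
    · intro x; simp
end

section
/- Let C be a small category and T₀, T₁ disjoint trees (subcategories whose localizations are indiscrete) in C, and let f : c₀ → c₁ be an arrow of C with c₀ an object of T₀ and c₁ an object of T₁. Define T to be the subcategory with objects Obj(T₀) ∪ Obj(T₁), morphisms those of T₀ and T₁, together with all composites β∘f∘α with α in T₀ and β in T₁, and no morphisms from objects of T₁ to objects of T₀. Then T is a tree, i.e., its localization is an indiscrete category. -/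
open CategoryTheory

universe v u

/-- A subcategory of a category `C`, given by a set of objects and sets of morphisms closed
under identities and composition. -/
structure Subcat (C : Type u) [Category.{v} C] : Type (max u v) where
  objs : Set C
  homs : ∀ x y : C, Set (x ⟶ y)
  src_mem : ∀ {x y : C} {f : x ⟶ y}, f ∈ homs x y → x ∈ objs
  tgt_mem : ∀ {x y : C} {f : x ⟶ y}, f ∈ homs x y → y ∈ objs
  id_mem : ∀ x ∈ objs, 𝟙 x ∈ homs x x
  comp_mem : ∀ {x y z : C} {f : x ⟶ y} {g : y ⟶ z},
    f ∈ homs x y → g ∈ homs y z → f ≫ g ∈ homs x z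

namespace Subcat
variable {C : Type u} [Category.{v} C] (S : Subcat C)

/-- The underlying category of a subcategory. -/
def carrier : Type u := {x : C // x ∈ S.objs}

instance : Category.{v} S.carrier where
  Hom a b := {f : a.1 ⟶ b.1 // f ∈ S.homs a.1 b.1}
  id a := ⟨𝟙 a.1, S.id_mem a.1 a.2⟩
  comp f g := ⟨f.1 ≫ g.1, S.comp_mem f.2 g.2⟩
  id_comp f := Subtype.ext (Category.id_comp f.1)
  comp_id f := Subtype.ext (Category.comp_id f.1)
  assoc f g h := Subtype.ext (Category.assoc f.1 g.1 h.1)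

/-- The inclusion functor of a subcategory. -/
def incl : S.carrier ⥤ C where
  obj x := x.1
  map f := f.1
  map_id _ := rfl
  map_comp _ _ := rfl

end Subcat

/-- A category is indiscrete if there is exactly one morphism between any two objects. -/
def IsIndiscrete (D : Type*) [Category D] : Prop := ∀ x y : D, ∃! _f : x ⟶ y, True

/-- A small category is a tree if its localization (at all of its morphisms) is indiscrete. -/
def IsTree (T : Type*) [Category T] : Prop :=
  IsIndiscrete ((⊤ : MorphismProperty T).Localization)

/-!
A category is a tree as soon as its localization functor `Q` is isomorphic to a constant functor:
such an isomorphism extends to `𝟭 ≅ const Z` on the localization, which leaves exactly one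
morphism between any two objects. Conversely, when `T₀` is a tree, every functor out of `T₀`
inverting all morphisms is isomorphic to a constant functor, since it factors through the
indiscrete localization.

Apply this to `Q` restricted to `T₀` and to `T₁`, and glue the two isomorphisms, to constant
functors at `Q c₀` and `Q c₁`, along the invertible `Q f`. Naturality of the glued
isomorphism is checked separately on morphisms of `T₀`, morphisms of `T₁`, and composites
`α ≫ f ≫ β`. Disjointness ensures that each object is treated by exactly one of the two pieces.
-/

section Indiscrete

variable {D : Type*} [Category D]

theorem isIndiscrete_of_iso_const {Z : D} (e : 𝟭 D ≅ (Functor.const D).obj Z) :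
    IsIndiscrete D := by
  intro x y
  refine ⟨e.hom.app x ≫ e.inv.app y, trivial, fun u _ => ?_⟩
  simpa using e.hom.naturality u =≫ e.inv.app y

theorem IsIndiscrete.hom_ext (h : IsIndiscrete D) {x y : D} (u u' : x ⟶ y) : u = u' :=
  (h x y).unique trivial trivial

noncomputable def IsIndiscrete.isoConst (h : IsIndiscrete D) (c : D) :
    𝟭 D ≅ (Functor.const D).obj c :=
  NatIso.ofComponents
    (fun x => ⟨(h x c).exists.choose, (h c x).exists.choose, h.hom_ext _ _, h.hom_ext _ _⟩)
    (fun _ => h.hom_ext _ _)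

end Indiscrete

section Localization

variable {C D : Type*} [Category C] [Category D]

theorem isIndiscrete_of_isLocalization (L : C ⥤ D) (W : MorphismProperty C)
    [L.IsLocalization W] {Z : D} (e : L ≅ (Functor.const C).obj Z) : IsIndiscrete D :=
  letI : Localization.Lifting L W ((Functor.const C).obj Z) ((Functor.const D).obj Z) :=
    ⟨Iso.refl _⟩
  isIndiscrete_of_iso_const (Localization.liftNatIso L W L _ (𝟭 D) ((Functor.const D).obj Z) e)

theorem isTree_of_iso_const {Z : (⊤ : MorphismProperty C).Localization}
    (e : (⊤ : MorphismProperty C).Q ≅ (Functor.const C).obj Z) : IsTree C :=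
  isIndiscrete_of_isLocalization _ ⊤ e

noncomputable def IsTree.isoConst {E : Type*} [Category E] (hC : IsTree C) (F : C ⥤ E)
    (hF : (⊤ : MorphismProperty C).IsInvertedBy F) (c : C) :
    F ≅ (Functor.const C).obj (F.obj c) :=
  (eqToIso (Localization.Construction.fac F hF)).symm ≪≫
    Functor.isoWhiskerLeft (⊤ : MorphismProperty C).Q
      (Functor.isoWhiskerRight (IsIndiscrete.isoConst hC ((⊤ : MorphismProperty C).Q.obj c))
          (Localization.Construction.lift F hF) ≪≫ Functor.constComp _ _ _)

end Localization

namespace Subcat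

variable {C : Type u} [Category.{v} C]

def inclusion {S S' : Subcat C} (h : ∀ x y, S.homs x y ⊆ S'.homs x y) :
    S.carrier ⥤ S'.carrier where
  obj x := ⟨x.1, S'.src_mem (h _ _ (S.id_mem x.1 x.2))⟩
  map g := ⟨g.1, h _ _ g.2⟩

def homMk {S : Subcat C} {x y : C} {g : x ⟶ y} (hg : g ∈ S.homs x y) :
    @Quiver.Hom S.carrier _ ⟨x, S.src_mem hg⟩ ⟨y, S.tgt_mem hg⟩ :=
  ⟨g, hg⟩

theorem map_comp_hom_app_of_mem {S T : Subcat C} {h : ∀ x y, S.homs x y ⊆ T.homs x y}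
    {E : Type*} [Category E] {F : T.carrier ⥤ E} {Z : E}
    (e : inclusion h ⋙ F ≅ (Functor.const _).obj Z) {x y : T.carrier} (g : x ⟶ y)
    (hg : g.1 ∈ S.homs x.1 y.1) :
    F.map g ≫ e.hom.app ⟨y.1, S.tgt_mem hg⟩ = e.hom.app ⟨x.1, S.src_mem hg⟩ :=
  (e.hom.naturality (homMk hg)).trans (Category.comp_id _)

end Subcat

section Glue

variable {C : Type u} [Category.{v} C] {T₀ T₁ T : Subcat C}
  {hT₀ : ∀ x y, T₀.homs x y ⊆ T.homs x y} {hT₁ : ∀ x y, T₁.homs x y ⊆ T.homs x y}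
  {c₀ c₁ : C} (hc₀ : c₀ ∈ T₀.objs) (hc₁ : c₁ ∈ T₁.objs) {f : c₀ ⟶ c₁} (hf : f ∈ T.homs c₀ c₁)
  (hobjs : T.objs ⊆ T₀.objs ∪ T₁.objs)
  {E : Type*} [Category E] {F : T.carrier ⥤ E}
  {Z₀ Z₁ : E} (e₀ : Subcat.inclusion hT₀ ⋙ F ≅ (Functor.const _).obj Z₀)
  (e₁ : Subcat.inclusion hT₁ ⋙ F ≅ (Functor.const _).obj Z₁)

open scoped Classical in
noncomputable def glueIsoConstApp [IsIso (F.map (Subcat.homMk hf))] (x : T.carrier) :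
    F.obj x ≅ Z₁ :=
  if hx : x.1 ∈ T₀.objs then
    e₀.app ⟨x.1, hx⟩ ≪≫ (e₀.app ⟨c₀, hc₀⟩).symm ≪≫ (asIso (F.map (Subcat.homMk hf)) :) ≪≫
      e₁.app ⟨c₁, hc₁⟩
  else e₁.app ⟨x.1, (hobjs x.2).resolve_left hx⟩

theorem glueIsoConstApp_hom_of_mem₀ [IsIso (F.map (Subcat.homMk hf))] {x : T.carrier}
    (hx : x.1 ∈ T₀.objs) :
    (glueIsoConstApp hc₀ hc₁ hf hobjs e₀ e₁ x).hom =
      e₀.hom.app ⟨x.1, hx⟩ ≫ e₀.inv.app ⟨c₀, hc₀⟩ ≫ F.map (Subcat.homMk hf) ≫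
        e₁.hom.app ⟨c₁, hc₁⟩ :=
  congrArg Iso.hom (dif_pos hx)

theorem glueIsoConstApp_hom_of_mem₁ [IsIso (F.map (Subcat.homMk hf))]
    (hdisj : Disjoint T₀.objs T₁.objs) {x : T.carrier} (hx : x.1 ∈ T₁.objs) :
    (glueIsoConstApp hc₀ hc₁ hf hobjs e₀ e₁ x).hom = e₁.hom.app ⟨x.1, hx⟩ :=
  congrArg Iso.hom (dif_neg (hdisj.notMem_of_mem_right hx))

theorem glueIsoConstApp_naturality [IsIso (F.map (Subcat.homMk hf))]
    (hdisj : Disjoint T₀.objs T₁.objs)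
    (hhoms : ∀ x y (g : x ⟶ y), g ∈ T.homs x y → g ∈ T₀.homs x y ∨ g ∈ T₁.homs x y ∨
      ∃ (α : x ⟶ c₀) (β : c₁ ⟶ y), α ∈ T₀.homs x c₀ ∧ β ∈ T₁.homs c₁ y ∧ g = α ≫ f ≫ β)
    {x y : T.carrier} (g : x ⟶ y) :
    F.map g ≫ (glueIsoConstApp hc₀ hc₁ hf hobjs e₀ e₁ y).hom =
      (glueIsoConstApp hc₀ hc₁ hf hobjs e₀ e₁ x).hom := by
  -- `exact` and `erw` instead of `rw`: an object `x : T.carrier` is a subtype, so that `x.1`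
  -- makes sense, only after unfolding `Subcat.carrier`.
  obtain hg | hg | ⟨α, β, hα, hβ, hg⟩ := hhoms x.1 y.1 g.1 g.2
  · rw [glueIsoConstApp_hom_of_mem₀ _ _ _ _ _ _ (T₀.src_mem hg),
      glueIsoConstApp_hom_of_mem₀ _ _ _ _ _ _ (T₀.tgt_mem hg)]
    exact (Category.assoc _ _ _).symm.trans (Subcat.map_comp_hom_app_of_mem e₀ g hg =≫ _)
  · rw [glueIsoConstApp_hom_of_mem₁ _ _ _ _ _ _ hdisj (T₁.src_mem hg),
      glueIsoConstApp_hom_of_mem₁ _ _ _ _ _ _ hdisj (T₁.tgt_mem hg)]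
    exact Subcat.map_comp_hom_app_of_mem e₁ g hg
  · let α' : x ⟶ ⟨c₀, T.src_mem hf⟩ := ⟨α, hT₀ _ _ hα⟩
    let β' : ⟨c₁, T.tgt_mem hf⟩ ⟶ y := ⟨β, hT₁ _ _ hβ⟩
    have hg' : g = α' ≫ Subcat.homMk hf ≫ β' := Subtype.ext hg
    have hα' : F.map α' = e₀.hom.app ⟨x.1, T₀.src_mem hα⟩ ≫ e₀.inv.app ⟨c₀, hc₀⟩ := by
      erw [← Subcat.map_comp_hom_app_of_mem e₀ α' hα, Category.assoc, Iso.hom_inv_id_app,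
        Category.comp_id]
    rw [glueIsoConstApp_hom_of_mem₀ _ _ _ _ _ _ (T₀.src_mem hα),
      glueIsoConstApp_hom_of_mem₁ _ _ _ _ _ _ hdisj (T₁.tgt_mem hβ), hg']
    erw [F.map_comp, F.map_comp, Category.assoc, Category.assoc,
      Subcat.map_comp_hom_app_of_mem e₁ β' hβ, hα', Category.assoc]
    rfl

noncomputable def glueIsoConst [IsIso (F.map (Subcat.homMk hf))]
    (hdisj : Disjoint T₀.objs T₁.objs)
    (hhoms : ∀ x y (g : x ⟶ y), g ∈ T.homs x y → g ∈ T₀.homs x y ∨ g ∈ T₁.homs x y ∨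
      ∃ (α : x ⟶ c₀) (β : c₁ ⟶ y), α ∈ T₀.homs x c₀ ∧ β ∈ T₁.homs c₁ y ∧ g = α ≫ f ≫ β) :
    F ≅ (Functor.const _).obj Z₁ :=
  NatIso.ofComponents (glueIsoConstApp hc₀ hc₁ hf hobjs e₀ e₁) fun g => by
    simpa using glueIsoConstApp_naturality hc₀ hc₁ hf hobjs e₀ e₁ hdisj hhoms g

end Glue

/-- Let `C` be a small category, `T₀, T₁` disjoint trees in `C` and
`f : c₀ ⟶ c₁` an arrow of `C` with `c₀` an object of `T₀` and `c₁` an object of `T₁`.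
Then the subcategory `T` with objects `Obj(T₀) ∪ Obj(T₁)`, morphisms those of `T₀` and `T₁`
together with all composites `β ∘ f ∘ α` (`α` in `T₀`, `β` in `T₁`), and no morphisms from
objects of `T₁` to objects of `T₀`, is a tree. -/
theorem stmt_10 {C : Type u} [Category.{v} C] (T₀ T₁ : Subcat C)
    (hdisj : Disjoint T₀.objs T₁.objs)
    (h₀ : IsTree T₀.carrier) (h₁ : IsTree T₁.carrier)
    {c₀ c₁ : C} (hc₀ : c₀ ∈ T₀.objs) (hc₁ : c₁ ∈ T₁.objs) (f : c₀ ⟶ c₁)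
    (T : Subcat C)
    (hobjs : T.objs = T₀.objs ∪ T₁.objs)
    (hhoms : ∀ (x y : C) (g : x ⟶ y),
      g ∈ T.homs x y ↔ (g ∈ T₀.homs x y ∨ g ∈ T₁.homs x y ∨
        ∃ (α : x ⟶ c₀) (β : c₁ ⟶ y), α ∈ T₀.homs x c₀ ∧ β ∈ T₁.homs c₁ y ∧
          g = α ≫ f ≫ β)) :
    IsTree T.carrier := by
  have hT₀ : ∀ x y, T₀.homs x y ⊆ T.homs x y := fun x y g hg => (hhoms x y g).2 (Or.inl hg)
  have hT₁ : ∀ x y, T₁.homs x y ⊆ T.homs x y := fun x y g hg =>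
    (hhoms x y g).2 (Or.inr (Or.inl hg))
  have hf : f ∈ T.homs c₀ c₁ := (hhoms c₀ c₁ f).2 (Or.inr (Or.inr
    ⟨𝟙 c₀, 𝟙 c₁, T₀.id_mem _ hc₀, T₁.id_mem _ hc₁, by simp⟩))
  let Q := (⊤ : MorphismProperty T.carrier).Q
  have hQ : (⊤ : MorphismProperty T.carrier).IsInvertedBy Q := MorphismProperty.Q_inverts _
  have : IsIso (Q.map (Subcat.homMk hf)) := hQ _ trivial
  exact isTree_of_iso_const <| glueIsoConst hc₀ hc₁ hf hobjs.subset
    (h₀.isoConst (Subcat.inclusion hT₀ ⋙ Q) (fun _ _ _ _ => hQ _ trivial) ⟨c₀, hc₀⟩)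
    (h₁.isoConst (Subcat.inclusion hT₁ ⋙ Q) (fun _ _ _ _ => hQ _ trivial) ⟨c₁, hc₁⟩)
    hdisj fun x y g hg => (hhoms x y g).1 hg
end

section
/- Let C be a connected small category and B a subcategory of C which is a forest (disjoint union of trees). Then B can be extended to a maximal tree of C, i.e., there exists a wide subcategory T of C containing B whose localization is indiscrete. -/
open CategoryTheory

universe v u

/-- A category is a forest if each of its connected components is a tree. -/
def IsForest (D : Type u) [Category.{v} D] : Prop :=
  ∀ j : ConnectedComponents D, IsTree (CategoryTheory.ConnectedComponents.Component j)

/-!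
Collapse each connected component of `B` to a point. Together with the morphisms of `C` these
points form a connected graph, so after fixing a root `r` every other point has a parent edge: a
morphism of `C` joining it to a point strictly closer to `r`. Let `T` be generated by `B` and the
parent edges. In the localization of `T`, the trees of `B` supply canonical morphisms inside each
component, and following parent edges gives a morphism from every object to `r`; these form a
cocone compatible with every morphism of `T`, and a groupoid admitting a cocone over all of its
objects is indiscrete.
-/

section Localization

variable {D : Type*} [Category D]

theorem IsIndiscrete.hom_ext_s11 {E : Type*} [Category E] (hE : IsIndiscrete E) {X Y : E}
    (f g : X ⟶ Y) : f = g :=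
  (hE X Y).unique trivial trivial

theorem isTree_of_cocone (Z : (⊤ : MorphismProperty D).Localization)
    (π : ∀ x : D, (⊤ : MorphismProperty D).Q.obj x ⟶ Z)
    (hπ : ∀ {a b : D} (g : a ⟶ b), (⊤ : MorphismProperty D).Q.map g ≫ π b = π a) :
    IsTree D := by
  let τ : (⊤ : MorphismProperty D).Q ⋙ 𝟭 _ ⟶
      (⊤ : MorphismProperty D).Q ⋙ (Functor.const _).obj Z :=
    { app := π
      naturality := fun _ _ g => by simpa using hπ g }
  let σ := Localization.Construction.natTransExtension τ
  intro X Y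
  refine ⟨σ.app X ≫ inv (σ.app Y), trivial, fun f _ => ?_⟩
  have h := σ.naturality f
  dsimp at h
  rw [Category.comp_id] at h
  rw [← h, Category.assoc, IsIso.hom_inv_id, Category.comp_id]

noncomputable abbrev CategoryTheory.Functor.liftTopLocalization {E : Type*} [Category E]
    [IsGroupoid E] (F : D ⥤ E) : (⊤ : MorphismProperty D).Localization ⥤ E :=
  Localization.Construction.lift F fun _ _ f _ => IsGroupoid.all_isIso (F.map f)

namespace IsTree

variable {E : Type*} [Category E] [IsGroupoid E] (hD : IsTree D) (F : D ⥤ E)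

noncomputable def transport (a b : D) : F.obj a ⟶ F.obj b :=
  F.liftTopLocalization.map
    (hD ((⊤ : MorphismProperty D).Q.obj a) ((⊤ : MorphismProperty D).Q.obj b)).exists.choose

theorem transport_comp (a b c : D) :
    hD.transport F a b ≫ hD.transport F b c = hD.transport F a c :=
  (F.liftTopLocalization.map_comp _ _).symm.trans
    (congrArg _ (IsIndiscrete.hom_ext_s11 hD _ _))

theorem map_eq_transport {a b : D} (f : a ⟶ b) : F.map f = hD.transport F a b := by
  -- the lift sends `Q.map f` to the one-edge path `𝟙 _ ≫ F.map f`
  rw [← Category.id_comp (F.map f)]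
  change F.liftTopLocalization.map ((⊤ : MorphismProperty D).Q.map f) = _
  exact congrArg _ (IsIndiscrete.hom_ext_s11 hD _ _)

theorem transport_self (a : D) : hD.transport F a a = 𝟙 _ := by
  rw [← map_eq_transport, F.map_id]

end IsTree

end Localization

theorem SimpleGraph.exists_adj_dist_lt {V : Type*} {G : SimpleGraph V} {u v : V}
    (h : G.dist u v ≠ 0) : ∃ w, G.Adj v w ∧ G.dist u w < G.dist u v := by
  rw [SimpleGraph.dist_comm] at h ⊢
  obtain ⟨p, hp⟩ := SimpleGraph.exists_walk_of_dist_ne_zero h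
  cases p with
  | nil => exact absurd hp.symm h
  | cons hadj q =>
    refine ⟨_, hadj, ?_⟩
    rw [SimpleGraph.dist_comm, ← hp, SimpleGraph.Walk.length_cons]
    exact Nat.lt_succ_of_le (SimpleGraph.dist_le q)

namespace Subcat

variable {C : Type u} [Category.{v} C] (B : Subcat C)

inductive Generated (E : Set (Σ x y : C, x ⟶ y)) : ∀ {x y : C}, (x ⟶ y) → Prop
  | of_mem_homs {x y : C} {f : x ⟶ y} : f ∈ B.homs x y → Generated E f
  | of_mem_edges {x y : C} {f : x ⟶ y} : ⟨x, y, f⟩ ∈ E → Generated E f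
  | id (x : C) : Generated E (𝟙 x)
  | comp {x y z : C} {f : x ⟶ y} {g : y ⟶ z} :
      Generated E f → Generated E g → Generated E (f ≫ g)

def wideAdjoin (E : Set (Σ x y : C, x ⟶ y)) : Subcat C where
  objs := Set.univ
  homs _ _ := {f | B.Generated E f}
  src_mem _ := trivial
  tgt_mem _ := trivial
  id_mem x _ := .id x
  comp_mem := .comp

def toWideAdjoin (E : Set (Σ x y : C, x ⟶ y)) : B.carrier ⥤ (B.wideAdjoin E).carrier where
  obj x := ⟨x.1, trivial⟩
  map f := ⟨f.1, .of_mem_homs f.2⟩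
  map_id _ := rfl
  map_comp _ _ := rfl

/-- `C` with each connected component of `B` collapsed to a point. -/
abbrev Vertex : Type u := ConnectedComponents B.carrier ⊕ {x : C // x ∉ B.objs}

open Classical in
noncomputable def vertex (x : C) : B.Vertex :=
  if hx : x ∈ B.objs then .inl (.mk ⟨x, hx⟩) else .inr ⟨x, hx⟩

variable {B}

theorem vertex_of_mem {x : C} (hx : x ∈ B.objs) : B.vertex x = .inl (.mk ⟨x, hx⟩) :=
  dif_pos hx

theorem vertex_of_not_mem {x : C} (hx : x ∉ B.objs) : B.vertex x = .inr ⟨x, hx⟩ :=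
  dif_neg hx

theorem mem_of_vertex_eq_inl {x : C} {j : ConnectedComponents B.carrier}
    (h : B.vertex x = .inl j) : x ∈ B.objs := by
  by_contra hx
  rw [vertex_of_not_mem hx] at h
  cases h

theorem mk_eq_of_vertex_eq_inl {x : C} {j : ConnectedComponents B.carrier}
    (h : B.vertex x = .inl j) :
    (.mk ⟨x, mem_of_vertex_eq_inl h⟩ : ConnectedComponents B.carrier) = j := by
  rw [vertex_of_mem (mem_of_vertex_eq_inl h)] at h
  exact Sum.inl_injective h

theorem eq_of_vertex_eq_inr {x : C} {z : {x : C // x ∉ B.objs}} (h : B.vertex x = .inr z) :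
    x = z.1 := by
  by_cases hx : x ∈ B.objs
  · rw [vertex_of_mem hx] at h
    cases h
  · rw [vertex_of_not_mem hx] at h
    exact congrArg Subtype.val (Sum.inr_injective h)

theorem vertex_eq_of_mem_homs {x y : C} {f : x ⟶ y} (hf : f ∈ B.homs x y) :
    B.vertex x = B.vertex y := by
  rw [vertex_of_mem (B.src_mem hf), vertex_of_mem (B.tgt_mem hf)]
  exact congrArg Sum.inl (Quotient.sound
    (Zigzag.of_hom (J := B.carrier) (j₁ := ⟨x, B.src_mem hf⟩) (j₂ := ⟨y, B.tgt_mem hf⟩)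
      ⟨f, hf⟩))

variable (B)

theorem vertex_surjective : Function.Surjective B.vertex
  | .inl j => by
    induction j using Quotient.inductionOn' with
    | h x => exact ⟨x.1, vertex_of_mem x.2⟩
  | .inr z => ⟨z.1, vertex_of_not_mem z.2⟩

def vertexGraph : SimpleGraph B.Vertex :=
  SimpleGraph.fromRel fun u w => ∃ (x y : C) (_ : x ⟶ y), B.vertex x = u ∧ B.vertex y = w

theorem reachable_of_zigzag {x y : C} (h : Zigzag x y) :
    B.vertexGraph.Reachable (B.vertex x) (B.vertex y) := by
  induction h with
  | refl => rfl
  | @tail y z _ hyz ih =>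
    refine ih.trans ?_
    by_cases heq : B.vertex y = B.vertex z
    · rw [heq]
    · refine SimpleGraph.Adj.reachable ((SimpleGraph.fromRel_adj _ _ _).2 ⟨heq, ?_⟩)
      rcases hyz with ⟨⟨f⟩⟩ | ⟨⟨f⟩⟩
      · exact .inl ⟨y, z, f, rfl, rfl⟩
      · exact .inr ⟨z, y, f, rfl, rfl⟩

theorem vertexGraph_connected [IsConnected C] : B.vertexGraph.Connected := by
  have : Nonempty B.Vertex := ⟨B.vertex (Classical.arbitrary C)⟩
  refine ⟨fun u w => ?_⟩
  obtain ⟨x, rfl⟩ := B.vertex_surjective u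
  obtain ⟨y, rfl⟩ := B.vertex_surjective w
  exact B.reachable_of_zigzag (isPreconnected_zigzag x y)

noncomputable def depth (r : C) (v : B.Vertex) : ℕ := B.vertexGraph.dist (B.vertex r) v

theorem vertex_eq_of_depth_eq_zero [IsConnected C] {r : C} {v : B.Vertex} (h : B.depth r v = 0) :
    B.vertex r = v :=
  B.vertexGraph_connected.dist_eq_zero_iff.1 h

theorem exists_parentEdge (r : C) {v : B.Vertex} (hv : B.depth r v ≠ 0) :
    ∃ e : Σ x y : C, x ⟶ y,
      (B.vertex e.1 = v ∧ B.depth r (B.vertex e.2.1) < B.depth r v) ∨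
      (B.vertex e.1 ≠ v ∧ B.vertex e.2.1 = v ∧ B.depth r (B.vertex e.1) < B.depth r v) := by
  obtain ⟨w, hadj, hlt⟩ := SimpleGraph.exists_adj_dist_lt hv
  obtain ⟨hne, ⟨x, y, f, rfl, rfl⟩ | ⟨x, y, f, rfl, rfl⟩⟩ :=
    (SimpleGraph.fromRel_adj _ _ _).1 hadj
  · exact ⟨⟨x, y, f⟩, .inl ⟨rfl, hlt⟩⟩
  · exact ⟨⟨x, y, f⟩, .inr ⟨Ne.symm hne, rfl, hlt⟩⟩

noncomputable def parentEdge (r : C) (v : B.Vertex) (hv : B.depth r v ≠ 0) :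
    Σ x y : C, x ⟶ y :=
  (B.exists_parentEdge r hv).choose

theorem parentEdge_spec (r : C) {v : B.Vertex} (hv : B.depth r v ≠ 0) :
    (B.vertex (B.parentEdge r v hv).1 = v ∧
      B.depth r (B.vertex (B.parentEdge r v hv).2.1) < B.depth r v) ∨
    (B.vertex (B.parentEdge r v hv).1 ≠ v ∧ B.vertex (B.parentEdge r v hv).2.1 = v ∧
      B.depth r (B.vertex (B.parentEdge r v hv).1) < B.depth r v) :=
  (B.exists_parentEdge r hv).choose_spec

def parentEdges (r : C) : Set (Σ x y : C, x ⟶ y) := {e | ∃ v hv, B.parentEdge r v hv = e}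

abbrev spanningTree (r : C) : Subcat C := B.wideAdjoin (B.parentEdges r)

variable (r : C)

abbrev treeObj (x : C) : (⊤ : MorphismProperty (B.spanningTree r).carrier).Localization :=
  (⊤ : MorphismProperty (B.spanningTree r).carrier).Q.obj ⟨x, trivial⟩

noncomputable abbrev treeHom {x y : C} (f : x ⟶ y) (hf : B.Generated (B.parentEdges r) f) :
    B.treeObj r x ⟶ B.treeObj r y :=
  (⊤ : MorphismProperty (B.spanningTree r).carrier).Q.map ⟨f, hf⟩

theorem treeHom_id (x : C) : B.treeHom r (𝟙 x) (.id x) = 𝟙 _ :=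
  (⊤ : MorphismProperty (B.spanningTree r).carrier).Q.map_id _

theorem treeHom_comp {x y z : C} {f : x ⟶ y} {g : y ⟶ z} (hf : B.Generated (B.parentEdges r) f)
    (hg : B.Generated (B.parentEdges r) g) :
    B.treeHom r (f ≫ g) (.comp hf hg) = B.treeHom r f hf ≫ B.treeHom r g hg :=
  (⊤ : MorphismProperty (B.spanningTree r).carrier).Q.map_comp
    (X := ⟨x, trivial⟩) (Y := ⟨y, trivial⟩) (Z := ⟨z, trivial⟩) ⟨f, hf⟩ ⟨g, hg⟩

noncomputable abbrev componentToTree (j : ConnectedComponents B.carrier) :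
    j.Component ⥤ (⊤ : MorphismProperty (B.spanningTree r).carrier).Localization :=
  j.ι ⋙ B.toWideAdjoin (B.parentEdges r) ⋙
    (⊤ : MorphismProperty (B.spanningTree r).carrier).Q

variable {B} (hB : IsForest B.carrier)

noncomputable def vertexPath : ∀ (v : B.Vertex) (x y : C), B.vertex x = v → B.vertex y = v →
    (B.treeObj r x ⟶ B.treeObj r y)
  | .inl j, x, y, hx, hy =>
    (hB j).transport (B.componentToTree r j)
      ⟨⟨x, mem_of_vertex_eq_inl hx⟩, mk_eq_of_vertex_eq_inl hx⟩
      ⟨⟨y, mem_of_vertex_eq_inl hy⟩, mk_eq_of_vertex_eq_inl hy⟩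
  | .inr _, _, _, hx, hy => eqToHom (by rw [eq_of_vertex_eq_inr hx, eq_of_vertex_eq_inr hy])

theorem vertexPath_comp (v : B.Vertex) (x y z : C) (hx : B.vertex x = v) (hy : B.vertex y = v)
    (hz : B.vertex z = v) :
    vertexPath r hB v x y hx hy ≫ vertexPath r hB v y z hy hz = vertexPath r hB v x z hx hz := by
  cases v with
  | inl j => exact (hB j).transport_comp _ _ _ _
  | inr _ => simp [vertexPath]

theorem vertexPath_self (v : B.Vertex) (x : C) (hx : B.vertex x = v) :
    vertexPath r hB v x x hx hx = 𝟙 _ := by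
  cases v with
  | inl j => exact (hB j).transport_self _ _
  | inr _ => simp [vertexPath]

theorem treeHom_eq_vertexPath {x y : C} {f : x ⟶ y} (hf : f ∈ B.homs x y) (v : B.Vertex)
    (hx : B.vertex x = v) (hy : B.vertex y = v) :
    B.treeHom r f (.of_mem_homs hf) = vertexPath r hB v x y hx hy := by
  cases v with
  | inl j =>
    exact (hB j).map_eq_transport (B.componentToTree r j)
      (a := ⟨⟨x, B.src_mem hf⟩, mk_eq_of_vertex_eq_inl hx⟩)
      (b := ⟨⟨y, B.tgt_mem hf⟩, mk_eq_of_vertex_eq_inl hy⟩)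
      (ObjectProperty.homMk ⟨f, hf⟩)
  | inr _ =>
    rw [vertex_of_mem (B.src_mem hf)] at hx
    cases hx

variable [IsConnected C]

open Classical in
noncomputable def toRoot (v : B.Vertex) (x : C) (hx : B.vertex x = v) :
    B.treeObj r x ⟶ B.treeObj r r :=
  if h0 : B.depth r v = 0 then vertexPath r hB v x r hx (B.vertex_eq_of_depth_eq_zero h0)
  else
    have he : B.parentEdge r v h0 ∈ B.parentEdges r := ⟨v, h0, rfl⟩
    if hs : B.vertex (B.parentEdge r v h0).1 = v then
      vertexPath r hB v x _ hx hs ≫ B.treeHom r (B.parentEdge r v h0).2.2 (.of_mem_edges he) ≫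
        toRoot _ (B.parentEdge r v h0).2.1 rfl
    else
      vertexPath r hB v x _ hx ((B.parentEdge_spec r h0).resolve_left fun h => hs h.1).2.1 ≫
        inv (B.treeHom r (B.parentEdge r v h0).2.2 (.of_mem_edges he)) ≫
          toRoot _ (B.parentEdge r v h0).1 rfl
termination_by B.depth r v
decreasing_by
  · exact ((B.parentEdge_spec r h0).resolve_right fun h => h.1 hs).2
  · exact ((B.parentEdge_spec r h0).resolve_left fun h => hs h.1).2.2

theorem toRoot_congr {v w : B.Vertex} (x : C) (hv : B.vertex x = v) (hw : B.vertex x = w) :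
    toRoot r hB v x hv = toRoot r hB w x hw := by
  subst hv hw
  rfl

theorem vertexPath_comp_toRoot (v : B.Vertex) (x y : C) (hx : B.vertex x = v)
    (hy : B.vertex y = v) :
    vertexPath r hB v x y hx hy ≫ toRoot r hB v y hy = toRoot r hB v x hx := by
  rw [toRoot, toRoot]
  split_ifs <;> simp only [← Category.assoc, vertexPath_comp]

theorem treeHom_comp_toRoot_of_mem_homs {x y : C} {f : x ⟶ y} (hf : f ∈ B.homs x y) :
    B.treeHom r f (.of_mem_homs hf) ≫ toRoot r hB _ y rfl = toRoot r hB _ x rfl := by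
  have hxy := vertex_eq_of_mem_homs hf
  rw [treeHom_eq_vertexPath r hB hf _ rfl hxy.symm, toRoot_congr r hB y rfl hxy.symm,
    vertexPath_comp_toRoot]

theorem treeHom_comp_toRoot_of_mem_parentEdges {e : Σ x y : C, x ⟶ y}
    (he : e ∈ B.parentEdges r) :
    B.treeHom r e.2.2 (.of_mem_edges he) ≫ toRoot r hB _ e.2.1 rfl = toRoot r hB _ e.1 rfl := by
  obtain ⟨v, h0, rfl⟩ := he
  by_cases hs : B.vertex (B.parentEdge r v h0).1 = v
  · rw [toRoot_congr r hB _ rfl hs]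
    conv_rhs => rw [toRoot, dif_neg h0, dif_pos hs, vertexPath_self, Category.id_comp]
  · have ht := ((B.parentEdge_spec r h0).resolve_left fun h => hs h.1).2.1
    rw [toRoot_congr r hB _ rfl ht]
    conv_lhs => rw [toRoot, dif_neg h0, dif_neg hs, vertexPath_self, Category.id_comp]
    exact IsIso.hom_inv_id_assoc _ _

theorem treeHom_comp_toRoot {x y : C} {f : x ⟶ y} (hf : B.Generated (B.parentEdges r) f) :
    B.treeHom r f hf ≫ toRoot r hB _ y rfl = toRoot r hB _ x rfl := by
  induction hf with
  | of_mem_homs hf => exact treeHom_comp_toRoot_of_mem_homs r hB hf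
  | of_mem_edges he => exact treeHom_comp_toRoot_of_mem_parentEdges r hB he
  | id x => rw [treeHom_id, Category.id_comp]
  | comp hf hg ihf ihg => rw [B.treeHom_comp r hf hg, Category.assoc, ihg, ihf]

end Subcat

theorem Subcat.isTree_spanningTree {C : Type u} [Category.{v} C] [IsConnected C] {B : Subcat C}
    (hB : IsForest B.carrier) (r : C) : IsTree (B.spanningTree r).carrier :=
  isTree_of_cocone _ (fun x => toRoot r hB _ x.1 rfl) fun g => treeHom_comp_toRoot r hB g.2

/-- Let `C` be a connected small category and `B` a subcategory of `C` which is
a forest.  Then `B` can be extended to a maximal tree of `C`: there is a wide subcategory `T`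
of `C` containing `B` which is a tree. -/
theorem stmt_11 {C : Type u} [Category.{v} C] [IsConnected C]
    (B : Subcat C) (hB : IsForest B.carrier) :
    ∃ T : Subcat C, T.objs = Set.univ ∧ B.objs ⊆ T.objs ∧
      (∀ x y : C, B.homs x y ⊆ T.homs x y) ∧ IsTree T.carrier := by
  obtain ⟨r⟩ : Nonempty C := IsConnected.is_nonempty
  exact ⟨B.spanningTree r, rfl, Set.subset_univ _, fun _ _ _ => .of_mem_homs,
    Subcat.isTree_spanningTree hB r⟩
end

section
/- Let X be a connected preordered set (Alexandroff space), G a group viewed as a one-object category, and F : X → G a functor. Define X̃ with underlying set X × G and preorder (x,g) ≤ (x',g') iff x ≤ x' and g = g'·F(x ≤ x'). Then the projection p : X̃ → X, equipped with the Alexandroff topologies, is a covering map: for each x ∈ X, p⁻¹(U_x) is the disjoint union over g ∈ G of the minimal open sets U_{(x,g)}, and p restricts to a homeomorphism U_{(x,g)} → U_x for every g. -/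
open Set

variable {X : Type*} {G : Type*}

/-- The Alexandroff topology of a preorder: the open sets are exactly the lower sets. -/
def alexandroffTopology (α : Type*) [Preorder α] : TopologicalSpace α where
  IsOpen s := IsLowerSet s
  isOpen_univ := isLowerSet_univ
  isOpen_inter _ _ := IsLowerSet.inter
  isOpen_sUnion _ := isLowerSet_sUnion

/-- The preorder on `X̃ = X × G` associated to a functor `F : X → G` from a preordered set
to a group: `(x, g) ≤ (x', g')` iff `x ≤ x'` and `g = g' * F (x ≤ x')`. -/
def tildePreorder [Preorder X] [Group G] (F : ∀ x y : X, x ≤ y → G)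
    (hF_id : ∀ x : X, F x x le_rfl = 1)
    (hF_comp : ∀ (x y z : X) (h : x ≤ y) (h' : y ≤ z), F x z (h.trans h') = F y z h' * F x y h) :
    Preorder (X × G) where
  le p q := ∃ h : p.1 ≤ q.1, p.2 = q.2 * F p.1 q.1 h
  le_refl p := ⟨le_rfl, by rw [hF_id, mul_one]⟩
  le_trans p q r := by
    rintro ⟨h, e⟩ ⟨h', e'⟩
    exact ⟨h.trans h', by rw [hF_comp p.1 q.1 r.1 h h', ← mul_assoc, ← e', e]⟩

/-- Let `X` be a connected preordered set (Alexandroff space), `G` a group and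
`F : X → G` a functor.  With `X̃ = X × G` preordered by `(x,g) ≤ (x',g')` iff `x ≤ x'` and
`g = g' * F(x ≤ x')`, and with both `X̃` and `X` carrying their Alexandroff topologies, the
projection `p : X̃ → X` is a covering map: `p⁻¹(U_x)` is the union of the minimal open sets
`U_{(x,g)}`, these are pairwise disjoint, and `p` restricts to a homeomorphism
`U_{(x,g)} → U_x` for every `g ∈ G`. -/
theorem stmt_15 [Preorder X] [Group G]
    (hconn : ∀ x y : X, Relation.ReflTransGen (fun a b => a ≤ b ∨ b ≤ a) x y)
    (F : ∀ x y : X, x ≤ y → G)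
    (hF_id : ∀ x : X, F x x le_rfl = 1)
    (hF_comp : ∀ (x y z : X) (h : x ≤ y) (h' : y ≤ z),
      F x z (h.trans h') = F y z h' * F x y h) :
    letI : Preorder (X × G) := tildePreorder F hF_id hF_comp
    letI tX : TopologicalSpace X := alexandroffTopology X
    letI tXG : TopologicalSpace (X × G) := alexandroffTopology (X × G)
    ∀ x : X,
      (Prod.fst ⁻¹' {x' : X | x' ≤ x} = ⋃ g : G, {p : X × G | p ≤ (x, g)}) ∧
      (Pairwise fun g g' : G =>
        Disjoint {p : X × G | p ≤ (x, g)} {p : X × G | p ≤ (x, g')}) ∧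
      (∀ g : G, IsHomeomorph fun p : {p : X × G | p ≤ (x, g)} =>
        (⟨p.1.1, p.2.choose⟩ : {x' : X | x' ≤ x})) := by
  letI : Preorder (X × G) := tildePreorder F hF_id hF_comp
  letI tX : TopologicalSpace X := alexandroffTopology X
  letI tXG : TopologicalSpace (X × G) := alexandroffTopology (X × G)
  intro x
  have le_def : ∀ p q : X × G, p ≤ q ↔ ∃ h : p.1 ≤ q.1, p.2 = q.2 * F p.1 q.1 h :=
    fun p q => Iff.rfl
  refine ⟨?_, ?_, ?_⟩
  · ext p
    simp only [mem_preimage, mem_setOf_eq, mem_iUnion, le_def]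
    constructor
    · intro h
      exact ⟨p.2 * (F p.1 x h)⁻¹, h, by group⟩
    · rintro ⟨g, h, -⟩
      exact h
  · intro g g' hne
    rw [Set.disjoint_left]
    rintro p hp hp'
    obtain ⟨h, e⟩ := hp
    obtain ⟨h', e'⟩ := hp'
    have hFF : F p.1 x h = F p.1 x h' := rfl
    exact hne (mul_right_cancel (a := g) (b := F p.1 x h) (by rw [← e, e', hFF]))
  · intro g
    have cfst : Continuous (Prod.fst : X × G → X) := by
      rw [continuous_def]
      intro s hs
      have hs' : IsLowerSet s := hs
      show IsLowerSet (Prod.fst ⁻¹' s)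
      intro a b hba ha
      exact hs' hba.choose ha
    let e : {p : X × G | p ≤ (x, g)} ≃ₜ {x' : X | x' ≤ x} :=
      { toFun := fun p => ⟨p.1.1, p.2.choose⟩
        invFun := fun x' => ⟨(x'.1, g * F x'.1 x x'.2), x'.2, rfl⟩
        left_inv := fun p => Subtype.ext (Prod.ext rfl p.2.choose_spec.symm)
        right_inv := fun x' => Subtype.ext rfl
        continuous_toFun := ((cfst.comp continuous_subtype_val).subtype_mk _)
        continuous_invFun := by
          apply Continuous.subtype_mk (f := fun x' : {x' : X | x' ≤ x} =>
            ((x'.1, g * F x'.1 x x'.2) : X × G))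
          rw [continuous_def]
          intro s hs
          have hs' : IsLowerSet s := hs
          rw [isOpen_induced_iff]
          refine ⟨{x' : X | ∃ h : x' ≤ x, (x', g * F x' x h) ∈ s}, ?_, ?_⟩
          · show IsLowerSet _
            rintro a b hba ⟨h, hm⟩
            refine ⟨hba.trans h, ?_⟩
            refine hs' (a := (a, g * F a x h)) ⟨hba, ?_⟩ hm
            have hc : F b x (hba.trans h) = F a x h * F b a hba := hF_comp b a x hba h
            rw [hc, ← mul_assoc]
          · ext x'
            constructor
            · rintro ⟨h, hm⟩
              exact hm
            · intro hm
              exact ⟨x'.2, hm⟩ }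
    exact e.isHomeomorph
end

section
/- Let X be a connected Alexandroff space, A a nonempty subspace, T a maximal tree of X meeting each connected component of A in a maximal tree of that component, x₀ ∈ X, and α : π₁(X,x₀) → G a group homomorphism. For a ∈ A let θ_a : π₁(X,a) → π₁(X,x₀) be the isomorphism induced by the unique arrow of LT from a to x₀. Then the functor F_{T,α} : X → G is trivial on A (sends all relations within A to the identity of G) if and only if the image of π₁(A,a) → π₁(X,a) is contained in ker(α∘θ_a) for every a ∈ A. -/
open CategoryTheory

universe v u

/-- The localization of a category at all of its morphisms. -/
abbrev LocCat (C : Type u) [Category.{v} C] := ((⊤ : MorphismProperty C)).Localization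

/-- The canonical functor to the localization. -/
abbrev locQ (C : Type u) [Category.{v} C] : C ⥤ LocCat C := ((⊤ : MorphismProperty C)).Q

/-- The functor `LD → LC` induced on localizations by a functor `D ⥤ C`. -/
noncomputable def locMap {D : Type u} [Category.{v} D] {C : Type u} [Category.{v} C]
    (F : D ⥤ C) : LocCat D ⥤ LocCat C :=
  CategoryTheory.Localization.Construction.lift (F ⋙ locQ C)
    (fun _ _ f _ => (⊤ : MorphismProperty C).Q_inverts (F.map f) (by trivial))

theorem locMap_obj {D : Type u} [Category.{v} D] {C : Type u} [Category.{v} C]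
    (F : D ⥤ C) (x : D) :
    (locMap F).obj ((locQ D).obj x) = (locQ C).obj (F.obj x) :=
  CategoryTheory.Functor.congr_obj
    (CategoryTheory.Localization.Construction.fac (F ⋙ locQ C)
      (fun _ _ f _ => (⊤ : MorphismProperty C).Q_inverts (F.map f) (by trivial))) x

/-- The inclusion of a subspace of an Alexandroff space (i.e. of a subset of a preordered
set), as a functor between the associated thin categories. -/
def inclFunctor {X : Type u} [Preorder X] (A : Set X) : ↥A ⥤ X :=
  Monotone.functor (f := (Subtype.val : ↥A → X)) (fun _ _ h => h)

/-!
Let `Φ : LX ⥤ G` send `g : a ⟶ b` to `α (τ x₀ a ≫ g ≫ τ b x₀)`; it is a functor because the tree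
arrows compose, and `F_{T,α} = Φ ∘ Q`. If `F_{T,α}` is trivial on `A`, then `Φ ∘ (LA → LX)` is
trivial on the generators of the localization `LA`, hence trivial. Conversely, for an arrow
`f : a ⟶ a'` of `A`, the tree `T` meets the component of `a` in `A` in a tree, whose arrow from
`a'` back to `a` closes `f` up into a loop of `LA`; its image in `LX` is `f ≫ τ a' a`, and applying
`α ∘ θ_a` to it gives `F_{T,α}(f)`.
-/

section LocMap

variable {C D E : Type u} [Category.{v} C] [Category.{v} D] [Category.{v} E]

theorem locMap_fac (F : D ⥤ C) : locQ D ⋙ locMap F = F ⋙ locQ C :=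
  Localization.Construction.fac _ _

theorem locMap_comp (F : D ⥤ C) (G : C ⥤ E) : locMap F ⋙ locMap G = locMap (F ⋙ G) := by
  apply Localization.Construction.uniq
  rw [← Functor.assoc, locMap_fac, Functor.assoc, locMap_fac, locMap_fac, Functor.assoc]

noncomputable def locMapHom (F : D ⥤ C) {x y : D} (t : (locQ D).obj x ⟶ (locQ D).obj y) :
    (locQ C).obj (F.obj x) ⟶ (locQ C).obj (F.obj y) :=
  eqToHom (locMap_obj F x).symm ≫ (locMap F).map t ≫ eqToHom (locMap_obj F y)

theorem locMapHom_id (F : D ⥤ C) (x : D) : locMapHom F (𝟙 ((locQ D).obj x)) = 𝟙 _ := by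
  simp [locMapHom]

theorem locMapHom_comp (F : D ⥤ C) {x y z : D} (s : (locQ D).obj x ⟶ (locQ D).obj y)
    (t : (locQ D).obj y ⟶ (locQ D).obj z) :
    locMapHom F (s ≫ t) = locMapHom F s ≫ locMapHom F t := by
  simp [locMapHom]

theorem locMapHom_map (F : D ⥤ C) {x y : D} (f : x ⟶ y) :
    locMapHom F ((locQ D).map f) = (locQ C).map (F.map f) := by
  have h := Functor.congr_hom (locMap_fac F) f
  simp only [Functor.comp_map] at h
  simp [locMapHom, h]

theorem locMapHom_locMapHom (F : D ⥤ C) (G : C ⥤ E) {x y : D}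
    (t : (locQ D).obj x ⟶ (locQ D).obj y) :
    locMapHom G (locMapHom F t) = locMapHom (F ⋙ G) t := by
  have h := Functor.congr_hom (locMap_comp F G) t
  simp only [Functor.comp_map] at h
  simp [locMapHom, h, eqToHom_map]

end LocMap

theorem map_eq_one_of_map_locQ_eq_one {C : Type u} [Category.{v} C] {M : Type*} [Monoid M]
    (H : LocCat C ⥤ SingleObj M) (hH : ∀ {x y : C} (f : x ⟶ y), H.map ((locQ C).map f) = 1)
    {u w : LocCat C} (g : u ⟶ w) : H.map g = 1 := by
  have hconst : H = (Functor.const _).obj (SingleObj.star M) :=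
    Localization.Construction.uniq _ _
      (CategoryTheory.Functor.ext (fun _ => rfl) (fun _ _ f => by simp [hH f]; rfl))
  simpa [SingleObj.id_as_one, SingleObj.comp_as_mul] using Functor.congr_hom hconst g

theorem map_locMapHom_eq_one {C D : Type u} [Category.{v} C] [Category.{v} D] {M : Type*}
    [Monoid M] (F : D ⥤ C) (H : LocCat C ⥤ SingleObj M)
    (hH : ∀ {x y : D} (f : x ⟶ y), H.map ((locQ C).map (F.map f)) = 1)
    {x y : D} (t : (locQ D).obj x ⟶ (locQ D).obj y) : H.map (locMapHom F t) = 1 := by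
  have hmap : ∀ {u w : D} (s : (locQ D).obj u ⟶ (locQ D).obj w),
      H.map (locMapHom F s) = (locMap F ⋙ H).map s := by
    intro u w s
    simp [locMapHom, eqToHom_map]
  rw [hmap]
  refine map_eq_one_of_map_locQ_eq_one (locMap F ⋙ H) (fun f => ?_) t
  rw [← hmap, locMapHom_map, hH]

section Conjugation

variable {C : Type u} [Category.{v} C] {M : Type*} [Monoid M] {x₀ : C}
  {α : ((locQ C).obj x₀ ⟶ (locQ C).obj x₀) → M}
  {τ : ∀ a b : C, (locQ C).obj a ⟶ (locQ C).obj b}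

theorem conj_loop_comp (hα_mul : ∀ g h, α (g ≫ h) = α g * α h)
    (hτ_comp : ∀ a b c, τ a b ≫ τ b c = τ a c) (hτ_self : ∀ a, τ a a = 𝟙 _) {p q r : C}
    (g : (locQ C).obj p ⟶ (locQ C).obj q) (h : (locQ C).obj q ⟶ (locQ C).obj r) :
    α (τ x₀ p ≫ (g ≫ h) ≫ τ r x₀) = α (τ x₀ p ≫ g ≫ τ q x₀) * α (τ x₀ q ≫ h ≫ τ r x₀) := by
  rw [← hα_mul]
  simp only [Category.assoc, reassoc_of% hτ_comp q x₀ q, hτ_self, Category.id_comp]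

theorem conj_loop_id (hα_one : α (𝟙 _) = 1) (hτ_comp : ∀ a b c, τ a b ≫ τ b c = τ a c)
    (hτ_self : ∀ a, τ a a = 𝟙 _) (p : C) : α (τ x₀ p ≫ 𝟙 _ ≫ τ p x₀) = 1 := by
  rw [Category.id_comp, hτ_comp, hτ_self, hα_one]

/-- For tree arrows `τ` this is `α` composed with `LC → LC/LT ≅ π₁(C, x₀)`, so that
`locQ C ⋙ conjFunctor _ _ _ _` is `F_{T,α}`. The target is `Mᵐᵒᵖ` because `SingleObj M`
composes as `f ≫ g = g * f`. -/
noncomputable def conjFunctor (hα_one : α (𝟙 _) = 1)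
    (hα_mul : ∀ g h, α (g ≫ h) = α g * α h)
    (hτ_comp : ∀ a b c, τ a b ≫ τ b c = τ a c) (hτ_self : ∀ a, τ a a = 𝟙 _) :
    LocCat C ⥤ SingleObj Mᵐᵒᵖ where
  obj _ := SingleObj.star _
  map {P Q} g := MulOpposite.op (α (τ x₀ P.as.obj ≫ g ≫ τ Q.as.obj x₀))
  map_id P := congrArg MulOpposite.op (conj_loop_id hα_one hτ_comp hτ_self P.as.obj)
  map_comp {P Q R} g h := by
    rw [SingleObj.comp_as_mul, ← MulOpposite.op_mul]
    exact congrArg MulOpposite.op (conj_loop_comp hα_mul hτ_comp hτ_self (p := P.as.obj) g h)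

end Conjugation

namespace Subcat

variable {C : Type u} [Category.{v} C]

def restrict (T : Subcat C) (s : Set C) (hs : s ⊆ T.objs) : Subcat C where
  objs := s
  homs x y := {f | f ∈ T.homs x y ∧ x ∈ s ∧ y ∈ s}
  src_mem hf := hf.2.1
  tgt_mem hf := hf.2.2
  id_mem x hx := ⟨T.id_mem x (hs hx), hx, hx⟩
  comp_mem hf hg := ⟨T.comp_mem hf.1 hg.1, hf.2.1, hg.2.2⟩

def restrictIncl (T : Subcat C) (s : Set C) (hs : s ⊆ T.objs) :
    (T.restrict s hs).carrier ⥤ T.carrier where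
  obj x := ⟨x.1, hs x.2⟩
  map f := ⟨f.1, f.2.1⟩
  map_id _ := rfl
  map_comp _ _ := rfl

def toSubtype {X : Type u} [Preorder X] (S : Subcat X) {A : Set X} (hA : S.objs ⊆ A) :
    S.carrier ⥤ ↥A where
  obj x := ⟨x.1, hA x.2⟩
  map f := homOfLE (leOfHom f.1)

end Subcat

def IsTreeArrows {C : Type u} [Category.{v} C] (T : Subcat C)
    (τ : ∀ a b : C, (locQ C).obj a ⟶ (locQ C).obj b) : Prop :=
  ∀ (a b : C) (ha : a ∈ T.objs) (hb : b ∈ T.objs)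
    (t : (locQ T.carrier).obj ⟨a, ha⟩ ⟶ (locQ T.carrier).obj ⟨b, hb⟩), τ a b = locMapHom T.incl t

section TreeArrows

variable {C : Type u} [Category.{v} C] {T : Subcat C}
  {τ : ∀ a b : C, (locQ C).obj a ⟶ (locQ C).obj b}

theorem tree_arrow_self (hτ : IsTreeArrows T τ) {a : C} (ha : a ∈ T.objs) : τ a a = 𝟙 _ :=
  (hτ a a ha ha (𝟙 _)).trans (locMapHom_id _ _)

theorem tree_arrow_comp (htree : IsTree T.carrier) (hτ : IsTreeArrows T τ) {a b c : C}
    (ha : a ∈ T.objs) (hb : b ∈ T.objs) (hc : c ∈ T.objs) :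
    τ a b ≫ τ b c = τ a c := by
  obtain ⟨s, -⟩ := htree ((locQ T.carrier).obj ⟨a, ha⟩) ((locQ T.carrier).obj ⟨b, hb⟩)
  obtain ⟨t, -⟩ := htree ((locQ T.carrier).obj ⟨b, hb⟩) ((locQ T.carrier).obj ⟨c, hc⟩)
  rw [hτ a b ha hb s, hτ b c hb hc t, hτ a c ha hc (s ≫ t)]
  exact (locMapHom_comp T.incl s t).symm

theorem tree_arrow_eq_locMapHom_restrict (hτ : IsTreeArrows T τ) {s : Set C} (hs : s ⊆ T.objs)
    {a b : C} (ha : a ∈ s) (hb : b ∈ s)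
    (t : (locQ (T.restrict s hs).carrier).obj ⟨a, ha⟩ ⟶
      (locQ (T.restrict s hs).carrier).obj ⟨b, hb⟩) :
    τ a b = locMapHom (T.restrict s hs).incl t :=
  (hτ a b (hs ha) (hs hb) (locMapHom (T.restrictIncl s hs) t)).trans
    (locMapHom_locMapHom (T.restrictIncl s hs) T.incl t)

end TreeArrows

theorem exists_loop_map_eq_comp_tree_arrow {X : Type u} [Preorder X] {A : Set X}
    {T : Subcat X} {τ : ∀ a b : X, (locQ X).obj a ⟶ (locQ X).obj b} (hτ : IsTreeArrows T τ)
    {s : Set X} (hsT : s ⊆ T.objs) (hsA : s ⊆ A) (hs : IsTree (T.restrict s hsT).carrier)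
    {a a' : X} (ha : a ∈ s) (ha' : a' ∈ s) (f : a ⟶ a') :
    ∃ γ : (locQ ↥A).obj ⟨a, hsA ha⟩ ⟶ (locQ ↥A).obj ⟨a, hsA ha⟩,
      locMapHom (inclFunctor A) γ = (locQ X).map f ≫ τ a' a := by
  obtain ⟨t, -⟩ := hs ((locQ _).obj ⟨a', ha'⟩) ((locQ _).obj ⟨a, ha⟩)
  refine ⟨(locQ ↥A).map (homOfLE (leOfHom f) : (⟨a, hsA ha⟩ : ↥A) ⟶ ⟨a', hsA ha'⟩) ≫
    locMapHom ((T.restrict s hsT).toSubtype hsA) t, ?_⟩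
  rw [tree_arrow_eq_locMapHom_restrict hτ hsT ha' ha t]
  exact (locMapHom_comp _ _ _).trans (congrArg₂ (· ≫ ·) (locMapHom_map _ _)
    (locMapHom_locMapHom _ _ t))

theorem stmt_17_general {X : Type u} [Preorder X]
    (A : Set X)
    (T : Subcat X) (hwide : T.objs = Set.univ) (htree : IsTree T.carrier)
    -- the intersection of `T` with each connected component of `A` is a tree
    (hmeet : ∀ (a : ↥A) (S : Subcat X),
      S.objs = {x : X | ∃ hx : x ∈ A, CategoryTheory.Zigzag (⟨x, hx⟩ : ↥A) a} →
      (∀ (x y : X) (f : x ⟶ y),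
        f ∈ S.homs x y ↔ f ∈ T.homs x y ∧ x ∈ S.objs ∧ y ∈ S.objs) →
      IsTree S.carrier)
    (x₀ : X) (G : Type*) [Group G]
    (α : ((locQ X).obj x₀ ⟶ (locQ X).obj x₀) → G)
    (hα_one : α (𝟙 _) = 1)
    (hα_mul : ∀ g h : ((locQ X).obj x₀ ⟶ (locQ X).obj x₀), α (g ≫ h) = α g * α h)
    -- the system of tree arrows of `T` in the localization `LX`
    (τ : ∀ a b : X, ((locQ X).obj a ⟶ (locQ X).obj b))
    (hτ : ∀ (a b : X) (ha : a ∈ T.objs) (hb : b ∈ T.objs)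
      (t : (locQ T.carrier).obj ⟨a, ha⟩ ⟶ (locQ T.carrier).obj ⟨b, hb⟩),
      τ a b = eqToHom (locMap_obj T.incl ⟨a, ha⟩).symm ≫ (locMap T.incl).map t ≫
        eqToHom (locMap_obj T.incl ⟨b, hb⟩)) :
    -- `F_{T,α}` is trivial on `A` iff `i₊(π₁(A,a)) ⊆ ker (α ∘ θ_a)` for every `a ∈ A`
    (∀ (a a' : X), a ∈ A → a' ∈ A → ∀ f : a ⟶ a',
        α (τ x₀ a ≫ (locQ X).map f ≫ τ a' x₀) = 1) ↔
      ∀ (a : ↥A) (γ : (locQ ↥A).obj a ⟶ (locQ ↥A).obj a),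
        α (τ x₀ a.1 ≫
            (eqToHom (locMap_obj (inclFunctor A) a).symm ≫ (locMap (inclFunctor A)).map γ ≫
              eqToHom (locMap_obj (inclFunctor A) a)) ≫
            τ a.1 x₀) = 1 := by
  have hT : ∀ x, x ∈ T.objs := fun x => hwide ▸ Set.mem_univ x
  have hτ_comp : ∀ a b c, τ a b ≫ τ b c = τ a c := fun a b c =>
    tree_arrow_comp htree hτ (hT a) (hT b) (hT c)
  have hτ_self : ∀ a, τ a a = 𝟙 _ := fun a => tree_arrow_self hτ (hT a)
  constructor
  · intro hF a γ
    exact MulOpposite.op_injective <| map_locMapHom_eq_one (inclFunctor A)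
      (conjFunctor hα_one hα_mul hτ_comp hτ_self)
      (fun {x y} f => congrArg MulOpposite.op (hF x.1 y.1 x.2 y.2 _)) γ
  · intro hloop a a' ha ha' f
    let s : Set X := {x | ∃ hx : x ∈ A, Zigzag (⟨x, hx⟩ : ↥A) ⟨a, ha⟩}
    have hs := hmeet ⟨a, ha⟩ (T.restrict s fun x _ => hT x) rfl fun _ _ _ => Iff.rfl
    obtain ⟨γ, hγ⟩ := exists_loop_map_eq_comp_tree_arrow hτ _ (fun x hx => hx.1) hs
      ⟨ha, .refl _⟩ ⟨ha', .of_inv (homOfLE (leOfHom f))⟩ f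
    calc α (τ x₀ a ≫ (locQ X).map f ≫ τ a' x₀)
        = α (τ x₀ a ≫ ((locQ X).map f ≫ τ a' a) ≫ τ a x₀) := by
          rw [← hτ_comp a' a x₀]; simp only [Category.assoc]
      _ = 1 := hγ ▸ hloop ⟨a, ha⟩ γ

/-- Let `X` be a connected Alexandroff space (viewed as a preorder/thin
category), `A` a nonempty subspace, `T` a maximal tree of `X` meeting each connected
component of `A` in a tree, `x₀ ∈ X` and `α : π₁(X,x₀) → G` a group homomorphism (with
`π₁(X,x₀) = Aut_{LX}(x₀)`).  For `a ∈ A` let `θ_a : π₁(X,a) → π₁(X,x₀)` be the isomorphism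
induced by the unique arrow of `LT` from `a` to `x₀` (conjugation by the tree arrows `τ`).
Then `F_{T,α}` is trivial on `A` iff the image of `π₁(A,a) → π₁(X,a)` is contained in
`ker (α ∘ θ_a)` for every `a ∈ A`. -/
theorem stmt_17 {X : Type u} [Preorder X] [IsConnected X]
    (A : Set X) (hA : A.Nonempty)
    (T : Subcat X) (hwide : T.objs = Set.univ) (htree : IsTree T.carrier)
    -- the intersection of `T` with each connected component of `A` is a tree
    (hmeet : ∀ (a : ↥A) (S : Subcat X),
      S.objs = {x : X | ∃ hx : x ∈ A, CategoryTheory.Zigzag (⟨x, hx⟩ : ↥A) a} →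
      (∀ (x y : X) (f : x ⟶ y),
        f ∈ S.homs x y ↔ f ∈ T.homs x y ∧ x ∈ S.objs ∧ y ∈ S.objs) →
      IsTree S.carrier)
    (x₀ : X) (G : Type*) [Group G]
    (α : ((locQ X).obj x₀ ⟶ (locQ X).obj x₀) → G)
    (hα_one : α (𝟙 _) = 1)
    (hα_mul : ∀ g h : ((locQ X).obj x₀ ⟶ (locQ X).obj x₀), α (g ≫ h) = α g * α h)
    -- the system of tree arrows of `T` in the localization `LX`
    (τ : ∀ a b : X, ((locQ X).obj a ⟶ (locQ X).obj b))
    (hτ : ∀ (a b : X) (ha : a ∈ T.objs) (hb : b ∈ T.objs)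
      (t : (locQ T.carrier).obj ⟨a, ha⟩ ⟶ (locQ T.carrier).obj ⟨b, hb⟩),
      τ a b = eqToHom (locMap_obj T.incl ⟨a, ha⟩).symm ≫ (locMap T.incl).map t ≫
        eqToHom (locMap_obj T.incl ⟨b, hb⟩)) :
    -- `F_{T,α}` is trivial on `A` iff `i₊(π₁(A,a)) ⊆ ker (α ∘ θ_a)` for every `a ∈ A`
    (∀ (a a' : X), a ∈ A → a' ∈ A → ∀ f : a ⟶ a',
        α (τ x₀ a ≫ (locQ X).map f ≫ τ a' x₀) = 1) ↔
      ∀ (a : ↥A) (γ : (locQ ↥A).obj a ⟶ (locQ ↥A).obj a),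
        α (τ x₀ a.1 ≫
            (eqToHom (locMap_obj (inclFunctor A) a).symm ≫ (locMap (inclFunctor A)).map γ ≫
              eqToHom (locMap_obj (inclFunctor A) a)) ≫
            τ a.1 x₀) = 1 :=
  stmt_17_general A T hwide htree hmeet x₀ G α hα_one hα_mul τ hτ
end
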